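/- Let W ∈ L(H) be a positive operator, S ⊆ H a closed subspace, and T the shorted operator of W to S. Then M⁻(W, ker T) = M⁻(W, S), i.e. an operator X ∈ L(H) satisfies X ⁻≤ W, range X ⊆ (ker T)^⊥ and range X* ⊆ (ker T)^⊥ if and only if X ⁻≤ W, range X ⊆ S^⊥ and range X* ⊆ S^⊥. -/

import Mathlib

open ContinuousLinearMap
open scoped ComplexInnerProductSpace

noncomputable section

variable {H : Type*} [NormedAddCommGroup H] [InnerProductSpace ℂ H] [CompleteSpace H]

/-- `M(W,S)`: the set of operators `X` with `0 ≤ X ≤ W` (Loewner order) and `range X ⊆ S^⊥`. -/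
def MSet (W : H →L[ℂ] H) (S : Submodule ℂ H) : Set (H →L[ℂ] H) :=
  {X | X.IsPositive ∧ (W - X).IsPositive ∧ LinearMap.range (X : H →ₗ[ℂ] H) ≤ Sᗮ}

/-- `T` is the shorted operator of `W` to `S`, i.e. the maximum of `M(W,S)` in the Loewner
order. -/
def IsShorted (W : H →L[ℂ] H) (S : Submodule ℂ H) (T : H →L[ℂ] H) : Prop :=
  T ∈ MSet W S ∧ ∀ X ∈ MSet W S, (T - X).IsPositive

/-- The minus order: `A ⁻≤ B` iff there are bounded idempotents `P, Q` with `A = PB` and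
`A* = QB*`. -/
def MinusLE (A B : H →L[ℂ] H) : Prop :=
  ∃ P Q : H →L[ℂ] H, IsIdempotentElem P ∧ IsIdempotentElem Q ∧
    A = P ∘L B ∧ adjoint A = Q ∘L adjoint B

/-- The pair `(W, N)` is compatible: there is a bounded idempotent `Q` with range `N` such that
`WQ` is selfadjoint. -/
def Compatible (W : H →L[ℂ] H) (N : Submodule ℂ H) : Prop :=
  ∃ Q : H →L[ℂ] H, IsIdempotentElem Q ∧ LinearMap.range (Q : H →ₗ[ℂ] H) = N ∧ IsSelfAdjoint (W ∘L Q)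

/-- `M⁻(W,S)`: operators `X` with `X ⁻≤ W`, `range X ⊆ S^⊥` and `range X* ⊆ S^⊥`. -/
def MMinusSet (W : H →L[ℂ] H) (S : Submodule ℂ H) : Set (H →L[ℂ] H) :=
  {X | MinusLE X W ∧ LinearMap.range (X : H →ₗ[ℂ] H) ≤ Sᗮ ∧ LinearMap.range ((adjoint X : H →L[ℂ] H) : H →ₗ[ℂ] H) ≤ Sᗮ}

/-- `X₀` is a `W`-inverse of `M` in `R(C)`: for every `x`, `X₀ x` is a `W`-weighted least squares
solution of `M z = C x`. -/
def WInverseIn (W M C X₀ : H →L[ℂ] H) : Prop :=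
  ∀ x z : H, (⟪W (M (X₀ x) - C x), M (X₀ x) - C x⟫).re ≤ (⟪W (M z - C x), M z - C x⟫).re

/-- The left weighted star order `A ₋*_W≤ B`. -/
def LStarW (W A B : H →L[ℂ] H) : Prop :=
  LinearMap.range (B : H →ₗ[ℂ] H) = LinearMap.range (A : H →ₗ[ℂ] H) ⊔ LinearMap.range ((B - A : H →L[ℂ] H) : H →ₗ[ℂ] H) ∧
  LinearMap.range (A : H →ₗ[ℂ] H) ⊓ LinearMap.range ((B - A : H →L[ℂ] H) : H →ₗ[ℂ] H) = ⊥ ∧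
  LinearMap.range ((B - A : H →L[ℂ] H) : H →ₗ[ℂ] H) ≤ LinearMap.ker ((adjoint A ∘L W : H →L[ℂ] H) : H →ₗ[ℂ] H)

/-- The right weighted star order `A ≤*_W B`. -/
def RStarW (W A B : H →L[ℂ] H) : Prop :=
  LinearMap.range ((adjoint B : H →L[ℂ] H) : H →ₗ[ℂ] H) =
    LinearMap.range ((adjoint A : H →L[ℂ] H) : H →ₗ[ℂ] H) ⊔ LinearMap.range ((adjoint B - adjoint A : H →L[ℂ] H) : H →ₗ[ℂ] H) ∧
  LinearMap.range ((adjoint A : H →L[ℂ] H) : H →ₗ[ℂ] H) ⊓ LinearMap.range ((adjoint B - adjoint A : H →L[ℂ] H) : H →ₗ[ℂ] H) = ⊥ ∧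
  LinearMap.range ((adjoint B - adjoint A : H →L[ℂ] H) : H →ₗ[ℂ] H) ≤ LinearMap.ker ((A ∘L W : H →L[ℂ] H) : H →ₗ[ℂ] H)

/-- The weighted star order `A *_W≤ B`. -/
def StarW (W A B : H →L[ℂ] H) : Prop :=
  LStarW W A B ∧ RStarW W A B

/-! Write `W = R* R` and let `P` be the orthogonal projection onto `(R S)ᗮ`. Then `R* P R` lies in
`M(W,S)`, so it is dominated by `T`; on `ker T` this forces `P R n = 0`, i.e.
`R (ker T) ⊆ closure (R S)`. If `X = P' W` vanishes on `S`, then `P' R*` vanishes on `R S`, hence on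
its closure, so `X` vanishes on `ker T`. Applied to `X` and `X*` (using `X* = Q W`) this gives
`M⁻(W,S) ⊆ M⁻(W, ker T)`; the other inclusion is `S ⊆ ker T`. -/

theorem ContinuousLinearMap.range_le_orthogonal_iff_le_ker_adjoint
    {𝕜 E F : Type*} [RCLike 𝕜] [NormedAddCommGroup E] [InnerProductSpace 𝕜 E] [CompleteSpace E]
    [NormedAddCommGroup F] [InnerProductSpace 𝕜 F] [CompleteSpace F]
    (X : E →L[𝕜] F) (S : Submodule 𝕜 F) :
    LinearMap.range (X : E →ₗ[𝕜] F) ≤ Sᗮ ↔ S ≤ LinearMap.ker (adjoint X : F →ₗ[𝕜] E) := by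
  rw [← orthogonal_range]
  exact (Submodule.orthogonal_gc 𝕜 F).le_iff_le.symm

theorem mem_MMinusSet_iff {W X : H →L[ℂ] H} {S : Submodule ℂ H} :
    X ∈ MMinusSet W S ↔ MinusLE X W ∧ S ≤ LinearMap.ker (adjoint X : H →ₗ[ℂ] H) ∧
      S ≤ LinearMap.ker (X : H →ₗ[ℂ] H) := by
  simp only [MMinusSet, Set.mem_ofPred_eq, range_le_orthogonal_iff_le_ker_adjoint, adjoint_adjoint]

theorem IsShorted.le_ker {W T : H →L[ℂ] H} {S : Submodule ℂ H} (hT : IsShorted W S T) :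
    S ≤ LinearMap.ker (T : H →ₗ[ℂ] H) := by
  obtain ⟨⟨hT_pos, -, hT_range⟩, -⟩ := hT
  rwa [range_le_orthogonal_iff_le_ker_adjoint, hT_pos.isSelfAdjoint.adjoint_eq] at hT_range

theorem adjoint_comp_starProjection_comp_mem_MSet (R : H →L[ℂ] H) (S : Submodule ℂ H) :
    adjoint R ∘L (S.map (R : H →ₗ[ℂ] H))ᗮ.starProjection ∘L R ∈ MSet (adjoint R ∘L R) S := by
  set K := (S.map (R : H →ₗ[ℂ] H))ᗮ
  have hproj : IsStarProjection K.starProjection := isStarProjection_starProjection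
  have hpos : (adjoint R ∘L K.starProjection ∘L R).IsPositive :=
    (IsPositive.of_isStarProjection hproj).adjoint_conj R
  refine ⟨hpos, ?_, ?_⟩
  · have hsub : adjoint R ∘L R - adjoint R ∘L K.starProjection ∘L R =
        adjoint R ∘L (1 - K.starProjection) ∘L R := by
      rw [sub_comp, comp_sub, one_def, id_comp]
    rw [hsub]
    exact (IsPositive.of_isStarProjection hproj.one_sub).adjoint_conj R
  · rw [range_le_orthogonal_iff_le_ker_adjoint, hpos.isSelfAdjoint.adjoint_eq]
    intro s hs
    have hRs : R s ∈ Kᗮ := Submodule.le_orthogonal_orthogonal _ (Submodule.mem_map_of_mem hs)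
    simp [(K.starProjection_apply_eq_zero_iff).mpr hRs]

theorem IsShorted.map_ker_le {R T : H →L[ℂ] H} {S : Submodule ℂ H}
    (hT : IsShorted (adjoint R ∘L R) S T) :
    (LinearMap.ker (T : H →ₗ[ℂ] H)).map (R : H →ₗ[ℂ] H) ≤ (S.map (R : H →ₗ[ℂ] H))ᗮᗮ := by
  set K := (S.map (R : H →ₗ[ℂ] H))ᗮ
  rintro _ ⟨n, hn, rfl⟩
  have hle := (hT.2 _ (adjoint_comp_starProjection_comp_mem_MSet R S)).re_inner_nonneg_left n
  have hTn : T n = 0 := hn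
  rw [sub_apply, hTn, zero_sub, inner_neg_left, map_neg, comp_apply, comp_apply,
    adjoint_inner_left, K.re_inner_starProjection_eq_normSq, neg_nonneg] at hle
  have hproj : K.orthogonalProjectionOnto (R n) = 0 :=
    norm_eq_zero.mp (pow_eq_zero_iff two_ne_zero |>.mp (le_antisymm hle (sq_nonneg _)))
  exact Submodule.orthogonalProjectionOnto_eq_zero_iff.mp hproj

theorem IsShorted.ker_le_ker_of_eq_comp {R T X P : H →L[ℂ] H} {S : Submodule ℂ H}
    (hT : IsShorted (adjoint R ∘L R) S T) (hX : X = P ∘L adjoint R ∘L R)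
    (hXS : S ≤ LinearMap.ker (X : H →ₗ[ℂ] H)) :
    LinearMap.ker (T : H →ₗ[ℂ] H) ≤ LinearMap.ker (X : H →ₗ[ℂ] H) := by
  have hclosure : (S.map (R : H →ₗ[ℂ] H))ᗮᗮ ≤ LinearMap.ker (P ∘L adjoint R : H →ₗ[ℂ] H) := by
    rw [Submodule.orthogonal_orthogonal_eq_closure]
    refine Submodule.topologicalClosure_minimal _ ?_ (isClosed_ker _)
    rintro _ ⟨s, hs, rfl⟩
    simpa [hX] using hXS hs
  intro n hn
  simpa [hX] using hclosure (hT.map_ker_le ⟨n, hn, rfl⟩)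

theorem stmt5_general (W T : H →L[ℂ] H) (S : Submodule ℂ H)
    (hW : W.IsPositive) (hT : IsShorted W S T) :
    MMinusSet W (LinearMap.ker (T : H →ₗ[ℂ] H)) = MMinusSet W S := by
  obtain ⟨R, rfl⟩ : ∃ R, W = adjoint R ∘L R :=
    CStarAlgebra.nonneg_iff_eq_star_mul_self.mp ((nonneg_iff_isPositive W).mpr hW)
  ext X
  simp only [mem_MMinusSet_iff]
  refine ⟨fun ⟨hXW, hX_adj, hX⟩ ↦ ⟨hXW, hT.le_ker.trans hX_adj, hT.le_ker.trans hX⟩, ?_⟩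
  rintro ⟨hXW, hX_adj, hX⟩
  obtain ⟨P, Q, -, -, hXP, hXQ⟩ := id hXW
  rw [hW.isSelfAdjoint.adjoint_eq] at hXQ
  exact ⟨hXW, hT.ker_le_ker_of_eq_comp hXQ hX_adj, hT.ker_le_ker_of_eq_comp hXP hX⟩

/-- `M⁻(W, ker T) = M⁻(W, S)` for the shorted operator `T` of `W` to `S`. -/
theorem stmt5 (W T : H →L[ℂ] H) (S : Submodule ℂ H) (hS : IsClosed (S : Set H))
    (hW : W.IsPositive) (hT : IsShorted W S T) :
    MMinusSet W (LinearMap.ker (T : H →ₗ[ℂ] H)) = MMinusSet W S :=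
  stmt5_general W T S hW hT
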